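/- arXiv:math/0503397 — 2 statements merged into one kernel-verified Lean document; each statement's English description precedes it below -/
import Mathlib

section
/- Let n ≥ 1, let 0 ≤ k ≤ n, and let φ be a continuous valuation on 𝒦(ℝⁿ) such that for every convex body K the function (t, x) ↦ φ(tK + x) is C^k on [0,1] × ℝⁿ, and such that ∂^j/∂t^j φ(tK + x)|_{t=0} = 0 for all j < k, all K, and all x. Define ψ(K, x) := (1/k!) · ∂^k/∂t^k φ(tK + x)|_{t=0}. Then for every fixed x ∈ ℝⁿ: (a) ψ(·, x) is translation invariant, i.e. ψ(K + a, x) = ψ(K, x) for every a ∈ ℝⁿ and every K; (b) ψ(·, x) is positively homogeneous of degree k, i.e. ψ(sK, x) = s^k ψ(K, x) for every s > 0; and (c) ψ(·, x) is a valuation: ψ(K ∪ K', x) + ψ(K ∩ K', x) = ψ(K, x) + ψ(K', x) whenever K ∪ K' is convex. -/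
open scoped Pointwise ContDiff
open MeasureTheory Set Filter

noncomputable section

/-- Euclidean space `ℝⁿ`. -/
abbrev Euc (n : ℕ) := EuclideanSpace ℝ (Fin n)

/-- The one-point convex body `{x}`. -/
def ptBody {n : ℕ} (x : Euc n) : ConvexBody (Euc n) :=
  ⟨{x}, convex_singleton x, isCompact_singleton, Set.singleton_nonempty x⟩

/-- The convex body `t • K + x`. -/
def scaleTrans {n : ℕ} (t : ℝ) (x : Euc n) (K : ConvexBody (Euc n)) : ConvexBody (Euc n) :=
  t • K + ptBody x

/-- `φ` is a valuation: whenever `M = K ∪ L` and `N = K ∩ L` are convex bodies,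
`φ M + φ N = φ K + φ L`. -/
def IsValuation {n : ℕ} (φ : ConvexBody (Euc n) → ℂ) : Prop :=
  ∀ K L M N : ConvexBody (Euc n),
    (M : Set (Euc n)) = (K : Set (Euc n)) ∪ (L : Set (Euc n)) →
    (N : Set (Euc n)) = (K : Set (Euc n)) ∩ (L : Set (Euc n)) →
    φ M + φ N = φ K + φ L

/-- `ψ(K, x) = (1/k!) ∂^k/∂t^k φ(tK + x)|_{t=0}` (one-sided derivative at `0`). -/
def psiDeriv {n : ℕ} (φ : ConvexBody (Euc n) → ℂ) (k : ℕ)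
    (K : ConvexBody (Euc n)) (x : Euc n) : ℂ :=
  ((Nat.factorial k : ℂ))⁻¹ * iteratedDerivWithin k (fun t => φ (scaleTrans t x K)) (Set.Ici 0) 0

/-!
The derivatives of order `< k` of `t ↦ φ(tK + y)` vanish at `t = 0` for every `y`, and the
`k`-th one is jointly continuous in `(t, y)`. Taylor's theorem with a remainder estimate that is
uniform in `y` therefore gives `t⁻ᵏ φ(tK + y(t)) → ψ(K, x)` as `t → 0⁺` along any `y(t) → x`.
All three properties of `ψ(·, x)` are limits of identities between such quotients:
`t(K + a) + x = tK + (x + ta)`, `t(sK) + x = (st)K + x`, and `K ↦ φ(tK + x)` is a valuation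
for `t > 0`.
-/

open scoped Topology

section OneVariable

variable {𝕜 : Type*} [NontriviallyNormedField 𝕜] {F : Type*} [NormedAddCommGroup F]
  [NormedSpace 𝕜 F]

theorem iteratedDerivWithin_congr_set {f : 𝕜 → F} {s t : Set 𝕜} {x : 𝕜} (h : s =ᶠ[𝓝 x] t)
    (n : ℕ) : iteratedDerivWithin n f s x = iteratedDerivWithin n f t x := by
  simp only [iteratedDerivWithin_eq_iteratedFDerivWithin, iteratedFDerivWithin_congr_set h]

theorem iteratedDerivWithin_pow_smul_const {s : Set 𝕜} (hs : UniqueDiffOn 𝕜 s) {x : 𝕜}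
    (hx : x ∈ s) (k j : ℕ) (v : F) :
    iteratedDerivWithin j (fun y => y ^ k • v) s x = (k.descFactorial j * x ^ (k - j)) • v := by
  rw [iteratedDerivWithin_smul_const hx hs (by fun_prop), iteratedDerivWithin_pow hx hs k j]

end OneVariable

theorem Icc_eventuallyEq_Ici {a b : ℝ} (hab : a < b) : Icc a b =ᶠ[𝓝 a] Ici a := by
  filter_upwards [Iio_mem_nhds hab] with s hs
  exact propext ⟨fun h => h.1, fun h => ⟨h, (hs : s < b).le⟩⟩

section Taylor

variable {F : Type*} [NormedAddCommGroup F] [NormedSpace ℝ F]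

theorem norm_sub_pow_smul_le_of_iteratedDerivWithin {f : ℝ → F} {k : ℕ} {t ε : ℝ} {c : F}
    (ht : 0 < t) (hf : ContDiffOn ℝ k f (Icc 0 t))
    (hvan : ∀ j < k, iteratedDerivWithin j f (Icc 0 t) 0 = 0)
    (hc : ∀ s ∈ Icc 0 t, ‖iteratedDerivWithin k f (Icc 0 t) s - c‖ ≤ ε) :
    ‖f t - (t ^ k / k.factorial) • c‖ ≤ ε * t ^ k := by
  have htt : t ∈ Icc 0 t := right_mem_Icc.2 ht.le
  cases k with
  | zero => simpa using hc t htt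
  | succ m =>
    have hI : UniqueDiffOn ℝ (Icc 0 t) := uniqueDiffOn_Icc ht
    set d : F := ((m + 1).factorial : ℝ)⁻¹ • c
    set g : ℝ → F := fun s => f s - s ^ (m + 1) • d
    have hmono : ContDiffOn ℝ (m + 1 : ℕ) (fun s : ℝ => s ^ (m + 1) • d) (Icc 0 t) := by
      fun_prop
    have hg_deriv : ∀ j ≤ m + 1, ∀ s ∈ Icc 0 t, iteratedDerivWithin j g (Icc 0 t) s =
        iteratedDerivWithin j f (Icc 0 t) s - ((m + 1).descFactorial j * s ^ (m + 1 - j)) • d := by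
      intro j hj s hs
      have hjk : (j : WithTop ℕ∞) ≤ (m + 1 : ℕ) := by exact_mod_cast hj
      rw [← iteratedDerivWithin_pow_smul_const hI hs]
      exact iteratedDerivWithin_sub hs hI ((hf.of_le hjk) s hs) ((hmono.of_le hjk) s hs)
    have htaylor : taylorWithinEval g m (Icc 0 t) 0 t = 0 := by
      refine (taylor_within_apply _ _ _ _ _).trans (Finset.sum_eq_zero fun j hj => ?_)
      have hjm : j < m + 1 := Finset.mem_range.1 hj
      rw [hg_deriv j hjm.le 0 (left_mem_Icc.2 ht.le), hvan j hjm,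
        zero_pow (Nat.sub_ne_zero_of_lt hjm), mul_zero, zero_smul, sub_self, smul_zero]
    have hrem := taylor_mean_remainder_bound (C := ε) ht.le (hf.sub hmono) htt fun s hs => by
      rw [hg_deriv _ le_rfl s hs, Nat.descFactorial_self, Nat.sub_self, pow_zero, mul_one,
        smul_inv_smul₀ (by positivity)]
      exact hc s hs
    have hε : 0 ≤ ε := (norm_nonneg _).trans (hc t htt)
    rw [htaylor, sub_zero, sub_zero] at hrem
    calc ‖f t - (t ^ (m + 1) / (m + 1).factorial) • c‖ = ‖g t‖ := by
          simp only [g, d, smul_smul, div_eq_mul_inv]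
      _ ≤ ε * t ^ (m + 1) / m.factorial := hrem
      _ ≤ ε * t ^ (m + 1) := div_le_self (by positivity) (by exact_mod_cast m.factorial_pos)

end Taylor

section PartialDerivative

variable {E : Type*} [NormedAddCommGroup E] [NormedSpace ℝ E]
  {F : Type*} [NormedAddCommGroup F] [NormedSpace ℝ F]

theorem iteratedDerivWithin_comp_prodMk_const {k : ℕ} {f : ℝ × E → F} {S : Set (ℝ × E)}
    (hf : ContDiffOn ℝ k f S) (hS : UniqueDiffOn ℝ S) {s : Set ℝ} (hs : UniqueDiffOn ℝ s)
    {y : E} (hsS : MapsTo (fun t => (t, y)) s S) {j : ℕ} (hj : j ≤ k) {t : ℝ} (ht : t ∈ s) :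
    iteratedDerivWithin j (fun t => f (t, y)) s t =
      iteratedFDerivWithin ℝ j f S (t, y) (fun _ => (1, 0)) := by
  induction j generalizing t with
  | zero => simp
  | succ j ih =>
    have hjk : (j : WithTop ℕ∞) < k := by exact_mod_cast hj
    have hline : HasFDerivWithinAt (fun t : ℝ => (t, y))
        ((ContinuousLinearMap.id ℝ ℝ).prod 0) s t :=
      ((hasFDerivAt_id t).prodMk (hasFDerivAt_const y t)).hasFDerivWithinAt
    have hD := (((hf.differentiableOn_iteratedFDerivWithin hjk hS) _
      (hsS ht)).hasFDerivWithinAt.comp t hline hsS)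
    have hderiv : HasDerivWithinAt
        (fun t => iteratedFDerivWithin ℝ j f S (t, y) (fun _ => (1, 0)))
        (iteratedFDerivWithin ℝ (j + 1) f S (t, y) (fun _ => (1, 0))) s t :=
      ((ContinuousMultilinearMap.apply ℝ (fun _ : Fin j => ℝ × E) F
        (fun _ => (1, 0))).hasFDerivAt.comp_hasFDerivWithinAt t hD).hasDerivWithinAt
    have hj' : j ≤ k := Nat.le_of_succ_le hj
    rw [iteratedDerivWithin_succ, ← hderiv.derivWithin (hs t ht)]
    exact derivWithin_congr (fun u hu => ih hj' hu) (ih hj' ht)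

theorem tendsto_inv_pow_smul_of_iteratedDerivWithin_eq_zero {k : ℕ} {f : ℝ × E → F}
    (hf : ContDiffOn ℝ k f (Icc 0 1 ×ˢ univ))
    (hvan : ∀ y, ∀ j < k, iteratedDerivWithin j (fun t => f (t, y)) (Ici 0) 0 = 0)
    {x : E} {y : ℝ → E} (hy : Tendsto y (𝓝[>] 0) (𝓝 x)) :
    Tendsto (fun t => (t ^ k)⁻¹ • f (t, y t)) (𝓝[>] 0)
      (𝓝 ((k.factorial : ℝ)⁻¹ • iteratedDerivWithin k (fun t => f (t, x)) (Ici 0) 0)) := by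
  set S := Icc (0 : ℝ) 1 ×ˢ (univ : Set E)
  have hS : UniqueDiffOn ℝ S := uniqueDiffOn_Icc_zero_one.prod uniqueDiffOn_univ
  have hline : ∀ {t} (z : E), t ≤ 1 → MapsTo (fun s => (s, z)) (Icc 0 t) S :=
    fun z ht s hs => ⟨⟨hs.1, hs.2.trans ht⟩, mem_univ z⟩
  have h0 : (0 : ℝ) ∈ Icc 0 1 := left_mem_Icc.2 zero_le_one
  set G : ℝ × E → F := fun p => iteratedFDerivWithin ℝ k f S p (fun _ => (1, 0))
  have hG : ContinuousWithinAt G S (0, x) :=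
    (ContinuousMultilinearMap.apply ℝ (fun _ : Fin k => ℝ × E) F
      (fun _ => (1, 0))).continuous.continuousAt.comp_continuousWithinAt
      (hf.continuousOn_iteratedFDerivWithin le_rfl hS _ (hline x le_rfl h0))
  have hd : iteratedDerivWithin k (fun t => f (t, x)) (Ici 0) 0 = G (0, x) := by
    rw [← iteratedDerivWithin_congr_set (Icc_eventuallyEq_Ici zero_lt_one)]
    exact iteratedDerivWithin_comp_prodMk_const hf hS uniqueDiffOn_Icc_zero_one (hline x le_rfl)
      le_rfl h0
  -- `G` is the `k`-th `t`-derivative of `f`; by joint continuity it is uniformly close to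
  -- `G (0, x)` on the whole segment `[0, t] × {y t}` once `t` is small
  have hclose : ∀ ε > 0, ∀ᶠ t in 𝓝[>] 0,
      t ≤ 1 ∧ ∀ s ∈ Icc 0 t, ‖G (s, y t) - G (0, x)‖ ≤ ε := by
    intro ε hε
    obtain ⟨δ, hδ, hGδ⟩ := Metric.continuousWithinAt_iff.1 hG ε hε
    filter_upwards [Ioo_mem_nhdsGT (lt_min hδ one_pos), hy (Metric.ball_mem_nhds x hδ)]
      with t ht hyt
    have ht1 : t ≤ 1 := ht.2.le.trans (min_le_right _ _)
    refine ⟨ht1, fun s hs => ?_⟩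
    rw [← dist_eq_norm]
    refine (hGδ (hline _ ht1 hs) ?_).le
    have hsδ : |s| < δ := by
      rw [abs_of_nonneg hs.1]; exact hs.2.trans_lt (ht.2.trans_le (min_le_left _ _))
    exact max_lt (by simpa using hsδ) hyt
  rw [hd, Metric.tendsto_nhds]
  intro ε hε
  filter_upwards [hclose (ε / 2) (half_pos hε), self_mem_nhdsWithin] with t ⟨ht1, htε⟩ ht0
  have ht0 : 0 < t := ht0
  have hTaylor : ‖f (t, y t) - (t ^ k / k.factorial) • G (0, x)‖ ≤ ε / 2 * t ^ k := by
    refine norm_sub_pow_smul_le_of_iteratedDerivWithin (f := fun s => f (s, y t)) ht0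
      (hf.comp (by fun_prop) (hline _ ht1)) (fun j hj => ?_) fun s hs => ?_
    · rw [iteratedDerivWithin_congr_set (Icc_eventuallyEq_Ici ht0)]
      exact hvan _ j hj
    · rw [iteratedDerivWithin_comp_prodMk_const hf hS (uniqueDiffOn_Icc ht0) (hline _ ht1)
        le_rfl hs]
      exact htε s hs
  have htk : 0 < t ^ k := pow_pos ht0 k
  calc dist ((t ^ k)⁻¹ • f (t, y t)) ((k.factorial : ℝ)⁻¹ • G (0, x))
      = (t ^ k)⁻¹ * ‖f (t, y t) - (t ^ k / k.factorial) • G (0, x)‖ := by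
        rw [dist_eq_norm, ← norm_smul_of_nonneg (inv_nonneg.2 htk.le), smul_sub, smul_smul,
          div_eq_mul_inv, inv_mul_cancel_left₀ htk.ne']
    _ ≤ (t ^ k)⁻¹ * (ε / 2 * t ^ k) := by gcongr
    _ < ε := by rw [inv_mul_eq_div, mul_div_cancel_right₀ _ htk.ne']; linarith

end PartialDerivative

section ConvexBodies

variable {n : ℕ}

theorem coe_ptBody (x : Euc n) : (ptBody x : Set (Euc n)) = {x} := rfl

theorem coe_scaleTrans (t : ℝ) (x : Euc n) (K : ConvexBody (Euc n)) :
    (scaleTrans t x K : Set (Euc n)) = t • (K : Set (Euc n)) + {x} := by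
  rw [scaleTrans, ConvexBody.coe_add, ConvexBody.coe_smul, coe_ptBody]

theorem ptBody_add_ptBody (u v : Euc n) : ptBody u + ptBody v = ptBody (u + v) :=
  ConvexBody.ext singleton_add_singleton

theorem smul_ptBody (t : ℝ) (a : Euc n) : t • ptBody a = ptBody (t • a) :=
  ConvexBody.ext smul_set_singleton

theorem scaleTrans_add_ptBody (t : ℝ) (x a : Euc n) (K : ConvexBody (Euc n)) :
    scaleTrans t x (K + ptBody a) = scaleTrans t (x + t • a) K := by
  rw [scaleTrans, scaleTrans, smul_add, smul_ptBody, add_assoc, ptBody_add_ptBody, add_comm x]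

theorem scaleTrans_smul (t c : ℝ) (x : Euc n) (K : ConvexBody (Euc n)) :
    scaleTrans t x (c • K) = scaleTrans (c * t) x K := by
  rw [scaleTrans, scaleTrans, smul_smul, mul_comm]

end ConvexBodies

namespace IsValuation

variable {n : ℕ} {φ : ConvexBody (Euc n) → ℂ}

theorem comp_scaleTrans (hφ : IsValuation φ) {t : ℝ} (ht : t ≠ 0) (x : Euc n) :
    IsValuation fun K => φ (scaleTrans t x K) := by
  intro K L M N hM hN
  refine hφ _ _ _ _ ?_ ?_
  · simp only [coe_scaleTrans, hM, smul_set_union, union_add]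
  · simp only [coe_scaleTrans, hN, smul_set_inter₀ ht, add_singleton,
      image_inter (add_left_injective x)]

theorem const_smul (hφ : IsValuation φ) (c : ℝ) : IsValuation fun K => c • φ K := by
  intro K L M N hM hN
  rw [← smul_add, ← smul_add, hφ K L M N hM hN]

theorem of_tendsto {ι : Type*} {l : Filter ι} [l.NeBot] {Φ : ι → ConvexBody (Euc n) → ℂ}
    (hΦ : ∀ᶠ i in l, IsValuation (Φ i)) (hφ : ∀ K, Tendsto (Φ · K) l (𝓝 (φ K))) :
    IsValuation φ := by
  intro K L M N hM hN
  refine tendsto_nhds_unique ((hφ M).add (hφ N)) (((hφ K).add (hφ L)).congr' ?_)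
  filter_upwards [hΦ] with i hi
  exact (hi K L M N hM hN).symm

end IsValuation

section LeadingTerm

variable {n k : ℕ} {φ : ConvexBody (Euc n) → ℂ}

theorem tendsto_psiDeriv
    (hsm : ∀ K : ConvexBody (Euc n),
      ContDiffOn ℝ k (fun p : ℝ × Euc n => φ (scaleTrans p.1 p.2 K)) (Icc 0 1 ×ˢ univ))
    (hvan : ∀ (K : ConvexBody (Euc n)) (x : Euc n), ∀ j < k,
      iteratedDerivWithin j (fun t => φ (scaleTrans t x K)) (Ici 0) 0 = 0)
    (K : ConvexBody (Euc n)) (x : Euc n) {y : ℝ → Euc n} (hy : Tendsto y (𝓝[>] 0) (𝓝 x)) :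
    Tendsto (fun t : ℝ => (t ^ k)⁻¹ • φ (scaleTrans t (y t) K)) (𝓝[>] 0)
      (𝓝 (psiDeriv φ k K x)) := by
  convert tendsto_inv_pow_smul_of_iteratedDerivWithin_eq_zero (hsm K) (hvan K) hy using 2
  rw [psiDeriv, Complex.real_smul]
  push_cast
  rfl

theorem psiDeriv_add_ptBody
    (hsm : ∀ K : ConvexBody (Euc n),
      ContDiffOn ℝ k (fun p : ℝ × Euc n => φ (scaleTrans p.1 p.2 K)) (Icc 0 1 ×ˢ univ))
    (hvan : ∀ (K : ConvexBody (Euc n)) (x : Euc n), ∀ j < k,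
      iteratedDerivWithin j (fun t => φ (scaleTrans t x K)) (Ici 0) 0 = 0)
    (x a : Euc n) (K : ConvexBody (Euc n)) :
    psiDeriv φ k (K + ptBody a) x = psiDeriv φ k K x := by
  have hy : Tendsto (fun t : ℝ => x + t • a) (𝓝[>] 0) (𝓝 x) :=
    (Continuous.tendsto' (by fun_prop) 0 x (by simp)).mono_left nhdsWithin_le_nhds
  refine tendsto_nhds_unique (tendsto_psiDeriv hsm hvan _ x tendsto_const_nhds) ?_
  simpa only [scaleTrans_add_ptBody] using tendsto_psiDeriv hsm hvan K x hy

theorem psiDeriv_smul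
    (hsm : ∀ K : ConvexBody (Euc n),
      ContDiffOn ℝ k (fun p : ℝ × Euc n => φ (scaleTrans p.1 p.2 K)) (Icc 0 1 ×ˢ univ))
    (hvan : ∀ (K : ConvexBody (Euc n)) (x : Euc n), ∀ j < k,
      iteratedDerivWithin j (fun t => φ (scaleTrans t x K)) (Ici 0) 0 = 0)
    (x : Euc n) {c : ℝ} (hc : 0 < c) (K : ConvexBody (Euc n)) :
    psiDeriv φ k (c • K) x = (c : ℂ) ^ k * psiDeriv φ k K x := by
  have hmul : Tendsto (c * ·) (𝓝[>] (0 : ℝ)) (𝓝[>] 0) :=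
    tendsto_comap.mono_left (comap_mulLeft_nhdsGT_zero hc).ge
  have hlim := ((tendsto_psiDeriv hsm hvan K x tendsto_const_nhds).comp hmul).const_smul (c ^ k)
  have hscale : ∀ t : ℝ, c ^ k * ((c * t) ^ k)⁻¹ = (t ^ k)⁻¹ := fun t => by
    rw [mul_pow, mul_inv, ← mul_assoc, mul_inv_cancel₀ (pow_ne_zero k hc.ne'), one_mul]
  simp only [Function.comp_def, smul_smul, hscale, ← scaleTrans_smul] at hlim
  rw [tendsto_nhds_unique (tendsto_psiDeriv hsm hvan (c • K) x tendsto_const_nhds) hlim,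
    Complex.real_smul]
  push_cast
  rfl

theorem isValuation_psiDeriv (hval : IsValuation φ)
    (hsm : ∀ K : ConvexBody (Euc n),
      ContDiffOn ℝ k (fun p : ℝ × Euc n => φ (scaleTrans p.1 p.2 K)) (Icc 0 1 ×ˢ univ))
    (hvan : ∀ (K : ConvexBody (Euc n)) (x : Euc n), ∀ j < k,
      iteratedDerivWithin j (fun t => φ (scaleTrans t x K)) (Ici 0) 0 = 0)
    (x : Euc n) : IsValuation fun K => psiDeriv φ k K x := by
  refine IsValuation.of_tendsto ?_ fun K => tendsto_psiDeriv hsm hvan K x tendsto_const_nhds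
  filter_upwards [self_mem_nhdsWithin] with t (ht : 0 < t)
  exact (hval.comp_scaleTrans ht.ne' x).const_smul _

end LeadingTerm

theorem leading_term_is_translation_invariant_homogeneous_valuation_general {n : ℕ}
    (k : ℕ)
    (φ : ConvexBody (Euc n) → ℂ) (hval : IsValuation φ)
    (hsm : ∀ K : ConvexBody (Euc n),
      ContDiffOn ℝ (k : WithTop ℕ∞) (fun p : ℝ × Euc n => φ (scaleTrans p.1 p.2 K))
        (Set.Icc 0 1 ×ˢ (Set.univ : Set (Euc n))))
    (hvan : ∀ (K : ConvexBody (Euc n)) (x : Euc n), ∀ j < k,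
      iteratedDerivWithin j (fun t => φ (scaleTrans t x K)) (Set.Ici 0) 0 = 0) :
    ∀ x : Euc n,
      (∀ (a : Euc n) (K : ConvexBody (Euc n)),
          psiDeriv φ k (K + ptBody a) x = psiDeriv φ k K x) ∧
      (∀ (c : ℝ), 0 < c → ∀ K : ConvexBody (Euc n),
          psiDeriv φ k (c • K) x = (c : ℂ) ^ k * psiDeriv φ k K x) ∧
      (∀ K L M N : ConvexBody (Euc n),
          (M : Set (Euc n)) = (K : Set (Euc n)) ∪ (L : Set (Euc n)) →
          (N : Set (Euc n)) = (K : Set (Euc n)) ∩ (L : Set (Euc n)) →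
          psiDeriv φ k M x + psiDeriv φ k N x = psiDeriv φ k K x + psiDeriv φ k L x) :=
  fun x => ⟨psiDeriv_add_ptBody hsm hvan x, fun _ hc => psiDeriv_smul hsm hvan x hc,
    isValuation_psiDeriv hval hsm hvan x⟩

/-- For a continuous valuation `φ` such that `(t,x) ↦ φ(tK+x)` is `C^k` and whose derivatives
of order `< k` at `t = 0` vanish, the function `ψ(K,x) = (1/k!) ∂^k_t φ(tK+x)|₀` is, for each
fixed `x`: (a) translation invariant in `K`, (b) positively homogeneous of degree `k` in `K`,
and (c) a valuation in `K`. -/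
theorem leading_term_is_translation_invariant_homogeneous_valuation {n : ℕ} (hn : 1 ≤ n)
    (k : ℕ) (hk : k ≤ n)
    (φ : ConvexBody (Euc n) → ℂ) (hval : IsValuation φ) (hcont : Continuous φ)
    (hsm : ∀ K : ConvexBody (Euc n),
      ContDiffOn ℝ (k : WithTop ℕ∞) (fun p : ℝ × Euc n => φ (scaleTrans p.1 p.2 K))
        (Set.Icc 0 1 ×ˢ (Set.univ : Set (Euc n))))
    (hvan : ∀ (K : ConvexBody (Euc n)) (x : Euc n), ∀ j < k,
      iteratedDerivWithin j (fun t => φ (scaleTrans t x K)) (Set.Ici 0) 0 = 0) :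
    ∀ x : Euc n,
      (∀ (a : Euc n) (K : ConvexBody (Euc n)),
          psiDeriv φ k (K + ptBody a) x = psiDeriv φ k K x) ∧
      (∀ (c : ℝ), 0 < c → ∀ K : ConvexBody (Euc n),
          psiDeriv φ k (c • K) x = (c : ℂ) ^ k * psiDeriv φ k K x) ∧
      (∀ K L M N : ConvexBody (Euc n),
          (M : Set (Euc n)) = (K : Set (Euc n)) ∪ (L : Set (Euc n)) →
          (N : Set (Euc n)) = (K : Set (Euc n)) ∩ (L : Set (Euc n)) →
          psiDeriv φ k M x + psiDeriv φ k N x = psiDeriv φ k K x + psiDeriv φ k L x) :=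
  leading_term_is_translation_invariant_homogeneous_valuation_general k φ hval hsm hvan
end
end

section
/- Let n ≥ 1 and let F : ℝⁿ → ℝ be positively homogeneous of degree 1 (F(tx) = t·F(x) for all t > 0 and x, and F(0) = 0) and of class C² on ℝⁿ ∖ {0}. Then there exists R > 0 such that the function G(x) := F(x) + R·‖x‖ (Euclidean norm) is convex on ℝⁿ. Consequently, F is the difference of the support functions of two convex bodies: there exist nonempty compact convex sets A, B ⊆ ℝⁿ such that F(y) = h_A(y) − h_B(y) for all y ∈ ℝⁿ, where h_A(y) := sup_{x ∈ A} ⟨x, y⟩. -/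
open scoped Pointwise ContDiff RealInnerProductSpace
open MeasureTheory Set Filter

noncomputable section

/-- The support function `h_A(y) = sup_{x ∈ A} ⟨x, y⟩` of a convex body. -/
def suppFn {n : ℕ} (A : ConvexBody (Euc n)) (y : Euc n) : ℝ :=
  sSup ((fun x => ⟪x, y⟫) '' (A : Set (Euc n)))

/-- A finite sublinear function on `ℝⁿ` is the support function of a convex body. -/
theorem sublinear_is_support {n : ℕ} (G : Euc n → ℝ)
    (hsub : ∀ x y, G (x + y) ≤ G x + G y)
    (hhomG : ∀ t : ℝ, 0 < t → ∀ x, G (t • x) = t * G x)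
    (hG0 : G 0 = 0) (C : ℝ) (hC : ∀ x, |G x| ≤ C * ‖x‖) :
    ∃ A : ConvexBody (Euc n), ∀ y, suppFn A y = G y := by
  classical
  have key : ∀ y₀ : Euc n, ∃ x : Euc n, (∀ y, ⟪x, y⟫ ≤ G y) ∧ ⟪x, y₀⟫ = G y₀ := by
    intro y₀
    by_cases hy₀ : y₀ = 0
    · obtain ⟨g, -, hg2⟩ := exists_extension_of_le_sublinear
        ((0 : Euc n →ₗ[ℝ] ℝ).toPMap ⊥) G hhomG hsub
        (by rintro ⟨x, hx⟩
            rcases Submodule.mem_bot ℝ |>.1 hx with rfl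
            simp [hG0, LinearMap.toPMap])
      refine ⟨(InnerProductSpace.toDual ℝ (Euc n)).symm (LinearMap.toContinuousLinearMap g), ?_, ?_⟩
      · intro y; rw [InnerProductSpace.toDual_symm_apply]; exact hg2 y
      · rw [InnerProductSpace.toDual_symm_apply]; simp [hy₀, hG0]
    · have hfle : ∀ x : (LinearPMap.mkSpanSingleton y₀ (G y₀) hy₀).domain,
          (LinearPMap.mkSpanSingleton y₀ (G y₀) hy₀ : Euc n →ₗ.[ℝ] ℝ) x ≤ G x := by
        rintro ⟨x, hx⟩
        obtain ⟨c, rfl⟩ := Submodule.mem_span_singleton.1 hx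
        rw [LinearPMap.mkSpanSingleton'_apply _ _ _ c (by exact hx)]
        rcases lt_trichotomy c 0 with hc | rfl | hc
        · have h1 : G (c • y₀) = (-c) * G (-y₀) := by
            have := hhomG (-c) (by linarith) (-y₀); simpa using this
          have h2 : 0 ≤ G y₀ + G (-y₀) := by
            have := hsub y₀ (-y₀); simpa [hG0] using this
          have : c * G y₀ ≤ (-c) * G (-y₀) := by nlinarith
          simpa [smul_eq_mul, h1] using this
        · simp [hG0]
        · rw [hhomG c hc]; simp [smul_eq_mul]
      obtain ⟨g, hg1, hg2⟩ := exists_extension_of_le_sublinear _ G hhomG hsub hfle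
      refine ⟨(InnerProductSpace.toDual ℝ (Euc n)).symm (LinearMap.toContinuousLinearMap g), ?_, ?_⟩
      · intro y; rw [InnerProductSpace.toDual_symm_apply]; exact hg2 y
      · rw [InnerProductSpace.toDual_symm_apply]
        have := hg1 ⟨y₀, Submodule.mem_span_singleton_self y₀⟩
        show g y₀ = G y₀
        rw [this, LinearPMap.mkSpanSingleton_apply]
  set S : Set (Euc n) := {x | ∀ y, ⟪x, y⟫ ≤ G y} with hS
  have hne : S.Nonempty := by obtain ⟨x, hx, -⟩ := key 0; exact ⟨x, hx⟩
  have hconv : Convex ℝ S := by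
    intro x hx x' hx' a b ha hb hab
    intro y
    have : ⟪a • x + b • x', y⟫ = a * ⟪x, y⟫ + b * ⟪x', y⟫ := by
      rw [inner_add_left, real_inner_smul_left, real_inner_smul_left]
    rw [this]
    calc a * ⟪x, y⟫ + b * ⟪x', y⟫ ≤ a * G y + b * G y := by gcongr <;>
          first | exact hx y | exact hx' y
      _ = G y := by rw [← add_mul, hab, one_mul]
  have hclosed : IsClosed S := by
    have : S = ⋂ y, {x : Euc n | ⟪x, y⟫ ≤ G y} := by ext x; simp [hS, Set.mem_iInter]
    rw [this]
    exact isClosed_iInter fun y =>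
      isClosed_le (Continuous.inner continuous_id continuous_const) continuous_const
  have hbdd : S ⊆ Metric.closedBall 0 |C| := by
    intro x hx
    simp only [Metric.mem_closedBall, dist_zero_right]
    rcases eq_or_ne x 0 with rfl | hx0
    · simp
    · have h1 : ⟪x, x⟫ ≤ G x := hx x
      have h2 : G x ≤ C * ‖x‖ := (abs_le.1 (hC x)).2
      have h3 : ⟪x, x⟫ = ‖x‖ ^ 2 := real_inner_self_eq_norm_sq x
      have h4 : ‖x‖ ≤ C := by nlinarith [norm_pos_iff.2 hx0]
      exact h4.trans (le_abs_self C)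
  have hcomp : IsCompact S :=
    Metric.isCompact_of_isClosed_isBounded hclosed
      (Bornology.IsBounded.subset (Metric.isBounded_closedBall) hbdd)
  refine ⟨⟨S, hconv, hcomp, hne⟩, fun y => ?_⟩
  have hbdd2 : BddAbove ((fun x => ⟪x, y⟫) '' S) := by
    refine ⟨G y, ?_⟩; rintro r ⟨x, hx, rfl⟩; exact hx y
  obtain ⟨x₀, hx₀, hx₀y⟩ := key y
  apply le_antisymm
  · exact csSup_le (hne.image _) (by rintro r ⟨x, hx, rfl⟩; exact hx y)
  · rw [← hx₀y]; exact le_csSup hbdd2 ⟨x₀, hx₀, rfl⟩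

/-- Convexity along a line avoiding the origin, from a pointwise lower bound on the second
derivative data. -/
theorem lineConvex {n : ℕ} (F : Euc n → ℝ) (R : ℝ)
    (hFd : ∀ q : Euc n, q ≠ 0 → HasFDerivAt F (fderiv ℝ F q) q)
    (hFd2 : ∀ q : Euc n, q ≠ 0 → HasFDerivAt (fderiv ℝ F) (fderiv ℝ (fderiv ℝ F) q) q)
    (hkey : ∀ q : Euc n, q ≠ 0 → ∀ v : Euc n,
      0 ≤ fderiv ℝ (fderiv ℝ F) q v v + R * ((‖v‖^2*‖q‖^2 - ⟪q,v⟫^2)/‖q‖^3))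
    (p v : Euc n) (I : Set ℝ) (hIo : IsOpen I) (hIc : Convex ℝ I)
    (hI : ∀ t ∈ I, p + t • v ≠ 0) :
    ConvexOn ℝ I (fun t => F (p + t • v) + R * ‖p + t • v‖) := by
  set ℓ : ℝ → Euc n := fun t => p + t • v with hℓdef
  have hℓ : ∀ t : ℝ, HasDerivAt ℓ v t := by
    intro t
    have := ((hasDerivAt_id t).smul_const v).const_add p
    rw [one_smul] at this
    exact this
  set D : ℝ → ℝ := fun t => fderiv ℝ F (ℓ t) v + R * (⟪ℓ t, v⟫ / ‖ℓ t‖) with hDdef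
  set D2 : ℝ → ℝ := fun t =>
    fderiv ℝ (fderiv ℝ F) (ℓ t) v v + R * ((‖v‖^2*‖ℓ t‖^2 - ⟪ℓ t,v⟫^2)/‖ℓ t‖^3) with hD2def
  have hnorm : ∀ t ∈ I, HasDerivAt (fun t => ‖ℓ t‖) (⟪ℓ t, v⟫ / ‖ℓ t‖) t := by
    intro t ht
    have hq : ℓ t ≠ 0 := hI t ht
    have hqn : ‖ℓ t‖ ≠ 0 := norm_ne_zero_iff.2 hq
    have ha : HasDerivAt (fun t => ⟪ℓ t, ℓ t⟫) (2 * ⟪ℓ t, v⟫) t := by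
      have := (hℓ t).inner ℝ (hℓ t)
      have h2 : ⟪ℓ t, v⟫ + ⟪v, ℓ t⟫ = 2 * ⟪ℓ t, v⟫ := by
        rw [real_inner_comm (ℓ t) v]; ring
      rwa [h2] at this
    have h0 : ⟪ℓ t, ℓ t⟫ ≠ 0 := by
      rw [real_inner_self_eq_norm_sq]
      positivity
    have hsq := (Real.hasDerivAt_sqrt h0).comp t ha
    have heq : (fun t => Real.sqrt ⟪ℓ t, ℓ t⟫) = fun t => ‖ℓ t‖ := by
      funext s
      rw [real_inner_self_eq_norm_mul_norm, Real.sqrt_mul_self (norm_nonneg _)]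
    have hval : Real.sqrt ⟪ℓ t, ℓ t⟫ = ‖ℓ t‖ := by
      rw [real_inner_self_eq_norm_mul_norm, Real.sqrt_mul_self (norm_nonneg _)]
    rw [Function.comp_def, heq] at hsq
    refine hsq.congr_deriv ?_
    rw [hval, one_div, inv_mul_eq_div, mul_div_mul_left _ _ two_ne_zero]
  have hD : ∀ t ∈ I, HasDerivAt (fun t => F (ℓ t) + R * ‖ℓ t‖) (D t) t := by
    intro t ht
    have h1 : HasDerivAt (fun t => F (ℓ t)) (fderiv ℝ F (ℓ t) v) t :=
      (hFd (ℓ t) (hI t ht)).comp_hasDerivAt t (hℓ t)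
    exact h1.add (((hnorm t ht)).const_mul R)
  have hD2 : ∀ t ∈ I, HasDerivAt D (D2 t) t := by
    intro t ht
    have hq : ℓ t ≠ 0 := hI t ht
    have hqn : ‖ℓ t‖ ≠ 0 := norm_ne_zero_iff.2 hq
    have h1 : HasDerivAt (fun t => fderiv ℝ F (ℓ t)) (fderiv ℝ (fderiv ℝ F) (ℓ t) v) t :=
      (hFd2 (ℓ t) hq).comp_hasDerivAt t (hℓ t)
    have h2 : HasDerivAt (fun t => fderiv ℝ F (ℓ t) v) (fderiv ℝ (fderiv ℝ F) (ℓ t) v v) t := by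
      have := h1.clm_apply (hasDerivAt_const t v)
      simpa using this
    have hb : HasDerivAt (fun t => ⟪ℓ t, v⟫) (‖v‖^2) t := by
      have h := (hℓ t).inner ℝ (hasDerivAt_const t v)
      have h0 : (⟪ℓ t, 0⟫ : ℝ) + ⟪v, v⟫ = ‖v‖^2 := by
        rw [inner_zero_right, real_inner_self_eq_norm_sq]; ring
      rwa [h0] at h
    have h3 : HasDerivAt (fun t => ⟪ℓ t, v⟫ / ‖ℓ t‖)
        ((‖v‖^2*‖ℓ t‖^2 - ⟪ℓ t,v⟫^2)/‖ℓ t‖^3) t := by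
      have := hb.div (hnorm t ht) hqn
      refine this.congr_deriv ?_
      field_simp
    exact h2.add (h3.const_mul R)
  have hdφ : ∀ t ∈ I, deriv (fun t => F (ℓ t) + R * ‖ℓ t‖) t = D t := fun t ht => (hD t ht).deriv
  apply convexOn_of_deriv2_nonneg hIc
  · exact fun t ht => (hD t ht).continuousAt.continuousWithinAt
  · rw [hIo.interior_eq]
    exact fun t ht => (hD t ht).differentiableAt.differentiableWithinAt
  · rw [hIo.interior_eq]
    intro t ht
    have hev : deriv (fun t => F (ℓ t) + R * ‖ℓ t‖) =ᶠ[nhds t] D :=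
      Filter.eventuallyEq_of_mem (hIo.mem_nhds ht) hdφ
    exact ((hD2 t ht).differentiableAt.congr_of_eventuallyEq hev).differentiableWithinAt
  · rw [hIo.interior_eq]
    intro t ht
    have hev : deriv (fun t => F (ℓ t) + R * ‖ℓ t‖) =ᶠ[nhds t] D :=
      Filter.eventuallyEq_of_mem (hIo.mem_nhds ht) hdφ
    have : deriv^[2] (fun t => F (ℓ t) + R * ‖ℓ t‖) t
        = deriv (deriv (fun t => F (ℓ t) + R * ‖ℓ t‖)) t := by
      simp [Function.iterate_succ', Function.comp]
    rw [this, hev.deriv_eq, (hD2 t ht).deriv]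
    exact hkey (ℓ t) (hI t ht) v

set_option maxHeartbeats 1600000 in
/-- A positively `1`-homogeneous function `F` of class `C²` away from the origin becomes convex
after adding a large multiple of the Euclidean norm; consequently it is a difference of support
functions of convex bodies. -/
theorem homogeneous_C2_is_difference_of_support_functions {n : ℕ} (hn : 1 ≤ n)
    (F : Euc n → ℝ)
    (hhom : ∀ t : ℝ, 0 < t → ∀ x : Euc n, F (t • x) = t * F x) (h0 : F 0 = 0)
    (hC2 : ContDiffOn ℝ 2 F ({0}ᶜ : Set (Euc n))) :
    (∃ R : ℝ, 0 < R ∧ ConvexOn ℝ Set.univ (fun x : Euc n => F x + R * ‖x‖)) ∧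
    ∃ A B : ConvexBody (Euc n), ∀ y : Euc n, F y = suppFn A y - suppFn B y := by
  have hso : IsOpen ({0}ᶜ : Set (Euc n)) := isOpen_compl_singleton
  have hmem : ∀ q : Euc n, q ≠ 0 → q ∈ ({0}ᶜ : Set (Euc n)) := fun q hq => hq
  -- first derivative exists off the origin
  have hFd : ∀ q : Euc n, q ≠ 0 → HasFDerivAt F (fderiv ℝ F q) q := by
    intro q hq
    exact ((hC2.differentiableOn (by norm_num)).differentiableAt
      (hso.mem_nhds (hmem q hq))).hasFDerivAt
  have hf'cd : ContDiffOn ℝ 1 (fderiv ℝ F) ({0}ᶜ : Set (Euc n)) := by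
    exact hC2.fderiv_of_isOpen (m := 1) hso (by norm_num)
  have hFd2 : ∀ q : Euc n, q ≠ 0 →
      HasFDerivAt (fderiv ℝ F) (fderiv ℝ (fderiv ℝ F) q) q := by
    intro q hq
    exact ((hf'cd.differentiableOn (by norm_num)).differentiableAt
      (hso.mem_nhds (hmem q hq))).hasFDerivAt
  have hf''cont : ContinuousOn (fderiv ℝ (fderiv ℝ F)) ({0}ᶜ : Set (Euc n)) :=
    hf'cd.continuousOn_fderiv_of_isOpen hso (le_refl 1)
  -- gradient is 0-homogeneous
  have hgradhom : ∀ t : ℝ, 0 < t → ∀ x : Euc n, x ≠ 0 →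
      fderiv ℝ F (t • x) = fderiv ℝ F x := by
    intro t ht x hx
    have htx : t • x ≠ 0 := smul_ne_zero (ne_of_gt ht) hx
    have hmap : HasFDerivAt (fun y : Euc n => t • y)
        (t • ContinuousLinearMap.id ℝ (Euc n)) x :=
      (t • ContinuousLinearMap.id ℝ (Euc n)).hasFDerivAt
    have h1 : HasFDerivAt (fun y => F (t • y))
        ((fderiv ℝ F (t • x)).comp (t • ContinuousLinearMap.id ℝ (Euc n))) x :=
      (hFd _ htx).comp x hmap
    have heq : (fun y : Euc n => F (t • y)) = fun y => t * F y :=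
      funext fun y => hhom t ht y
    rw [heq] at h1
    have h2 : HasFDerivAt (fun y => t * F y) (t • fderiv ℝ F x) x :=
      (hFd x hx).const_mul t
    have h3 := h1.unique h2
    ext v
    have h4 := congrArg (fun L : Euc n →L[ℝ] ℝ => L v) h3
    simp only [ContinuousLinearMap.comp_apply, ContinuousLinearMap.smul_apply,
      ContinuousLinearMap.id_apply, ContinuousLinearMap.map_smul, smul_eq_mul] at h4
    exact mul_left_cancel₀ (ne_of_gt ht) h4
  -- Hessian relation: t • f''(t•x) = f'' x
  have hhesshom : ∀ t : ℝ, 0 < t → ∀ x : Euc n, x ≠ 0 → ∀ v : Euc n,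
      t • (fderiv ℝ (fderiv ℝ F) (t • x) v) = fderiv ℝ (fderiv ℝ F) x v := by
    intro t ht x hx v
    have htx : t • x ≠ 0 := smul_ne_zero (ne_of_gt ht) hx
    have hmap : HasFDerivAt (fun y : Euc n => t • y)
        (t • ContinuousLinearMap.id ℝ (Euc n)) x :=
      (t • ContinuousLinearMap.id ℝ (Euc n)).hasFDerivAt
    have h1 : HasFDerivAt (fun y : Euc n => fderiv ℝ F (t • y))
        ((fderiv ℝ (fderiv ℝ F) (t • x)).comp (t • ContinuousLinearMap.id ℝ (Euc n))) x :=
      (hFd2 _ htx).comp x hmap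
    have heq : fderiv ℝ F =ᶠ[nhds x] fun y : Euc n => fderiv ℝ F (t • y) := by
      filter_upwards [hso.eventually_mem (hmem x hx)] with y hy
      exact (hgradhom t ht y hy).symm
    have h1' : HasFDerivAt (fderiv ℝ F)
        ((fderiv ℝ (fderiv ℝ F) (t • x)).comp (t • ContinuousLinearMap.id ℝ (Euc n))) x :=
      h1.congr_of_eventuallyEq heq
    have h3 := h1'.unique (hFd2 x hx)
    have h4 := congrArg (fun L => L v) h3
    simp only [ContinuousLinearMap.comp_apply, ContinuousLinearMap.smul_apply,
      ContinuousLinearMap.id_apply, ContinuousLinearMap.map_smul] at h4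
    exact h4
  -- Hessian annihilates the radial direction
  have hselfzero : ∀ x : Euc n, x ≠ 0 → fderiv ℝ (fderiv ℝ F) x x = 0 := by
    intro x hx
    have hline : HasDerivAt (fun t : ℝ => t • x) x 1 := by
      simpa using (hasDerivAt_id (1:ℝ)).smul_const x
    have h1 : HasDerivAt (fun t : ℝ => fderiv ℝ F (t • x))
        (fderiv ℝ (fderiv ℝ F) x x) 1 := by
      have hFd2' : HasFDerivAt (fderiv ℝ F) (fderiv ℝ (fderiv ℝ F) x) ((1:ℝ) • x) := by
        rw [one_smul]; exact hFd2 x hx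
      have := hFd2'.comp_hasDerivAt (1:ℝ) hline
      exact this
    have hconst : (fun _ : ℝ => fderiv ℝ F x) =ᶠ[nhds (1:ℝ)]
        (fun t : ℝ => fderiv ℝ F (t • x)) := by
      filter_upwards [eventually_gt_nhds zero_lt_one] with t ht
      exact (hgradhom t ht x hx).symm
    have h2 : HasDerivAt (fun t : ℝ => fderiv ℝ F (t • x)) 0 1 :=
      (hasDerivAt_const (1:ℝ) (fderiv ℝ F x)).congr_of_eventuallyEq hconst.symm
    exact h1.unique h2
  -- symmetry of the Hessian
  have hsymm : ∀ x : Euc n, x ≠ 0 → ∀ v w : Euc n,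
      fderiv ℝ (fderiv ℝ F) x v w = fderiv ℝ (fderiv ℝ F) x w v := by
    intro x hx v w
    have hev : ∀ᶠ y in nhds x, HasFDerivAt F (fderiv ℝ F y) y := by
      filter_upwards [hso.eventually_mem (hmem x hx)] with y hy
      exact hFd y hy
    exact second_derivative_symmetric_of_eventually hev (hFd2 x hx) v w
  -- bounds on the unit sphere
  have hsubset : Metric.sphere (0 : Euc n) 1 ⊆ ({0}ᶜ : Set (Euc n)) := by
    intro x hx
    simp only [mem_sphere_iff_norm, sub_zero] at hx
    intro h; rw [Set.mem_singleton_iff] at h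
    rw [h] at hx; simp at hx
  have hsphne : (Metric.sphere (0 : Euc n) 1).Nonempty := by
    refine ⟨EuclideanSpace.single ⟨0, hn⟩ (1:ℝ), ?_⟩
    simp [EuclideanSpace.norm_single]
  obtain ⟨M₀, hM₀⟩ := (isCompact_sphere (0 : Euc n) 1).exists_bound_of_continuousOn
    (hC2.continuousOn.mono hsubset)
  obtain ⟨M, hM⟩ := (isCompact_sphere (0 : Euc n) 1).exists_bound_of_continuousOn
    ((hf'cd.continuousOn_fderiv_of_isOpen hso (le_refl 1)).mono hsubset)
  obtain ⟨u₀, hu₀⟩ := hsphne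
  have hM₀0 : 0 ≤ M₀ := le_trans (norm_nonneg _) (hM₀ u₀ hu₀)
  have hM0 : 0 ≤ M := le_trans (norm_nonneg _) (hM u₀ hu₀)
  set R : ℝ := M₀ + M + 1 with hRdef
  have hRpos : 0 < R := by positivity
  have hRM₀ : M₀ ≤ R := by linarith
  have hRM : M ≤ R := by linarith
  -- F bound
  have hFbound : ∀ x : Euc n, |F x| ≤ M₀ * ‖x‖ := by
    intro x
    rcases eq_or_ne x 0 with rfl | hx
    · simp [h0]
    · have hxn : (0:ℝ) < ‖x‖ := norm_pos_iff.2 hx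
      set u : Euc n := ‖x‖⁻¹ • x with hu
      have hun : u ∈ Metric.sphere (0 : Euc n) 1 := by
        simp only [mem_sphere_iff_norm, sub_zero]
        exact norm_smul_inv_norm hx
      have hxu : ‖x‖ • u = x := by
        rw [hu, smul_smul, mul_inv_cancel₀ (ne_of_gt hxn), one_smul]
      have : F x = ‖x‖ * F u := by rw [← hxu, hhom ‖x‖ hxn u, hxu]
      rw [this, abs_mul, abs_of_pos hxn, mul_comm]
      have := hM₀ u hun
      rw [Real.norm_eq_abs] at this
      exact mul_le_mul_of_nonneg_right this (le_of_lt hxn)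
  -- Hessian bound, pointwise form
  have hf''bound : ∀ q : Euc n, q ≠ 0 → ∀ w : Euc n,
      |fderiv ℝ (fderiv ℝ F) q w w| ≤ (M / ‖q‖) * (‖w‖ * ‖w‖) := by
    intro q hq w
    have hqn : (0:ℝ) < ‖q‖ := norm_pos_iff.2 hq
    set u : Euc n := ‖q‖⁻¹ • q with hu
    have hun : u ∈ Metric.sphere (0 : Euc n) 1 := by
      simp only [mem_sphere_iff_norm, sub_zero]
      exact norm_smul_inv_norm hq
    have hune : u ≠ 0 := by
      intro h; rw [h] at hun; simp at hun
    have hqu : ‖q‖ • u = q := by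
      rw [hu, smul_smul, mul_inv_cancel₀ (ne_of_gt hqn), one_smul]
    have h5 := hhesshom ‖q‖ hqn u hune w
    rw [hqu] at h5
    have h6 := congrArg (fun L : Euc n →L[ℝ] ℝ => L w) h5
    simp only [ContinuousLinearMap.smul_apply, smul_eq_mul] at h6
    have h7 : |fderiv ℝ (fderiv ℝ F) u w w| ≤ M * (‖w‖ * ‖w‖) := by
      have l1 : |fderiv ℝ (fderiv ℝ F) u w w| ≤ ‖fderiv ℝ (fderiv ℝ F) u w‖ * ‖w‖ := by
        rw [← Real.norm_eq_abs]
        exact (fderiv ℝ (fderiv ℝ F) u w).le_opNorm w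
      have l2 : ‖fderiv ℝ (fderiv ℝ F) u w‖ ≤ ‖fderiv ℝ (fderiv ℝ F) u‖ * ‖w‖ :=
        (fderiv ℝ (fderiv ℝ F) u).le_opNorm w
      have l3 := hM u hun
      nlinarith [norm_nonneg w, norm_nonneg (fderiv ℝ (fderiv ℝ F) u w)]
    have h8 : fderiv ℝ (fderiv ℝ F) q w w = (fderiv ℝ (fderiv ℝ F) u w w) / ‖q‖ := by
      rw [← h6]
      field_simp
    rw [h8, abs_div, abs_of_pos hqn]
    have hrw : (M / ‖q‖) * (‖w‖ * ‖w‖) = (M * (‖w‖ * ‖w‖)) / ‖q‖ := by ring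
    rw [hrw]
    gcongr
  -- the key second-derivative inequality
  have hkey : ∀ q : Euc n, q ≠ 0 → ∀ v : Euc n,
      0 ≤ fderiv ℝ (fderiv ℝ F) q v v + R * ((‖v‖^2*‖q‖^2 - ⟪q,v⟫^2)/‖q‖^3) := by
    intro q hq v
    have hqn : (0:ℝ) < ‖q‖ := norm_pos_iff.2 hq
    set c : ℝ := ⟪q,v⟫ / ‖q‖^2 with hc
    set w : Euc n := v - c • q with hwdef
    have hvw : v = w + c • q := by rw [hwdef]; abel
    have hzero : fderiv ℝ (fderiv ℝ F) q q = 0 := hselfzero q hq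
    have hwq : fderiv ℝ (fderiv ℝ F) q w q = 0 := by
      rw [hsymm q hq w q, hzero]
      simp
    have hred : fderiv ℝ (fderiv ℝ F) q v v = fderiv ℝ (fderiv ℝ F) q w w := by
      conv_lhs => rw [hvw]
      rw [(fderiv ℝ (fderiv ℝ F) q).map_add, (fderiv ℝ (fderiv ℝ F) q).map_smul, hzero,
        smul_zero, add_zero, (fderiv ℝ (fderiv ℝ F) q w).map_add,
        (fderiv ℝ (fderiv ℝ F) q w).map_smul, hwq, smul_zero, add_zero]
    have hwnorm : ‖w‖^2 = (‖v‖^2*‖q‖^2 - ⟪q,v⟫^2) / ‖q‖^2 := by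
      have e : (⟪w, w⟫ : ℝ) = ⟪v,v⟫ - 2*c*⟪q,v⟫ + c^2*⟪q,q⟫ := by
        simp only [hwdef, inner_sub_left, inner_sub_right, real_inner_smul_left,
          real_inner_smul_right, real_inner_comm v q]
        ring
      rw [← real_inner_self_eq_norm_sq w, e, real_inner_self_eq_norm_sq q,
        real_inner_self_eq_norm_sq v, hc]
      field_simp
      ring
    have habs : |fderiv ℝ (fderiv ℝ F) q w w| ≤ (M / ‖q‖) * ‖w‖^2 := by
      have := hf''bound q hq w
      have hw2 : ‖w‖ * ‖w‖ = ‖w‖^2 := by ring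
      rwa [hw2] at this
    have he1 : (‖v‖^2*‖q‖^2 - ⟪q,v⟫^2)/‖q‖^3 = ‖w‖^2 / ‖q‖ := by
      rw [hwnorm, div_div]
      ring_nf
    rw [hred, he1]
    have hstep : (M / ‖q‖) * ‖w‖^2 ≤ R * (‖w‖^2 / ‖q‖) := by
      rw [div_mul_eq_mul_div, mul_div_assoc]
      gcongr
    linarith [neg_abs_le (fderiv ℝ (fderiv ℝ F) q w w), habs]
  -- notation for G
  set G : Euc n → ℝ := fun x => F x + R * ‖x‖ with hGdef
  have hG0 : G 0 = 0 := by simp [hGdef, h0]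
  have hGhom : ∀ t : ℝ, 0 < t → ∀ x : Euc n, G (t • x) = t * G x := by
    intro t ht x
    simp only [hGdef]
    rw [hhom t ht x, norm_smul, Real.norm_eq_abs, abs_of_pos ht]
    ring
  have hGhom0 : ∀ t : ℝ, 0 ≤ t → ∀ x : Euc n, G (t • x) = t * G x := by
    intro t ht x
    rcases eq_or_lt_of_le ht with rfl | ht'
    · simp [hG0]
    · exact hGhom t ht' x
  have hGsum : ∀ v : Euc n, 0 ≤ G v + G (-v) := by
    intro v
    have h1 := hFbound v
    have h2 := hFbound (-v)
    rw [norm_neg] at h2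
    simp only [hGdef, norm_neg]
    have := abs_le.1 h1
    have := abs_le.1 h2
    nlinarith [norm_nonneg v, abs_le.1 h1, abs_le.1 h2]
  -- subadditivity of G
  have hGsub : ∀ x y : Euc n, G (x + y) ≤ G x + G y := by
    intro x y
    by_cases hcase : ∃ t ∈ Icc (0:ℝ) 1, x + t • (y - x) = 0
    · -- segment through the origin
      obtain ⟨t₀, ht₀, hz⟩ := hcase
      by_cases hv : y - x = 0
      · have hx0 : x = 0 := by rw [hv, smul_zero, add_zero] at hz; exact hz
        have hy0 : y = 0 := by
          have : y = x + (y - x) := by abel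
          rw [this, hv, hx0]; simp
        rw [hx0, hy0]
        simp [hG0]
      · set v : Euc n := y - x with hvdef
        have hxv : x = t₀ • (-v) := by
          rw [smul_neg]
          linear_combination (norm := module) hz
        have hyv : y = (1 - t₀) • v := by
          have : y = x + v := by rw [hvdef]; abel
          rw [this, hxv]
          module
        have hGx : G x = t₀ * G (-v) := by rw [hxv, hGhom0 t₀ ht₀.1]
        have hGy : G y = (1 - t₀) * G v := by
          rw [hyv, hGhom0 (1 - t₀) (by linarith [ht₀.2])]
        have hsum := hGsum v
        rcases le_or_gt t₀ (1/2 : ℝ) with h12 | h12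
        · have hxy : x + y = (1 - 2*t₀) • v := by
            rw [hxv, hyv]; module
          have : G (x + y) = (1 - 2*t₀) * G v := by
            rw [hxy, hGhom0 (1 - 2*t₀) (by linarith)]
          rw [this, hGx, hGy]
          nlinarith [ht₀.1]
        · have hxy : x + y = (2*t₀ - 1) • (-v) := by
            rw [hxv, hyv]; module
          have : G (x + y) = (2*t₀ - 1) * G (-v) := by
            rw [hxy, hGhom0 (2*t₀ - 1) (by linarith)]
          rw [this, hGx, hGy]
          nlinarith [ht₀.2]
    · -- segment avoiding the origin
      push_neg at hcase
      have hseg : ∀ t ∈ Icc (0:ℝ) 1, x + t • (y - x) ≠ 0 := hcase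
      have hx0 : x ≠ 0 := by
        have := hseg 0 ⟨le_refl 0, zero_le_one⟩
        simpa using this
      obtain ⟨I, hIo, hIc, hI, h0I, h1I⟩ :
          ∃ I : Set ℝ, IsOpen I ∧ Convex ℝ I ∧ (∀ t ∈ I, x + t • (y - x) ≠ 0) ∧
            (0:ℝ) ∈ I ∧ (1:ℝ) ∈ I := by
        by_cases hz : ∃ t : ℝ, x + t • (y - x) = 0
        · obtain ⟨t₀, ht₀⟩ := hz
          have ht₀n : t₀ ∉ Icc (0:ℝ) 1 := fun h => hseg t₀ h ht₀
          have hvne : y - x ≠ 0 := by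
            intro h
            rw [h, smul_zero, add_zero] at ht₀
            exact hx0 ht₀
          have huniq : ∀ t : ℝ, t ≠ t₀ → x + t • (y - x) ≠ 0 := by
            intro t hne heq
            apply hne
            have : (t - t₀) • (y - x) = 0 := by
              have := sub_eq_zero.2 (heq.trans ht₀.symm)
              linear_combination (norm := module) this
            rcases smul_eq_zero.1 this with h | h
            · exact sub_eq_zero.1 h
            · exact absurd h hvne
          rcases not_and_or.1 (by rwa [Set.mem_Icc] at ht₀n) with h | h
          · push_neg at h
            refine ⟨Ioi t₀, isOpen_Ioi, convex_Ioi t₀, ?_, ?_, ?_⟩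
            · exact fun t ht => huniq t (ne_of_gt ht)
            · exact h
            · exact lt_trans h zero_lt_one
          · push_neg at h
            refine ⟨Iio t₀, isOpen_Iio, convex_Iio t₀, ?_, ?_, ?_⟩
            · exact fun t ht => huniq t (ne_of_lt ht)
            · exact lt_trans zero_lt_one h
            · exact h
        · push_neg at hz
          exact ⟨Set.univ, isOpen_univ, convex_univ, fun t _ => hz t, trivial, trivial⟩
      have hcvx := lineConvex F R hFd hFd2 hkey x (y - x) I hIo hIc hI
      have hkey2 := hcvx.2 h0I h1I (by norm_num : (0:ℝ) ≤ 1/2) (by norm_num : (0:ℝ) ≤ 1/2)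
        (by norm_num)
      simp only [smul_eq_mul, mul_zero, mul_one, zero_add] at hkey2
      have hmid : x + (1/2 : ℝ) • (y - x) = (1/2 : ℝ) • (x + y) := by module
      have hend0 : x + (0:ℝ) • (y - x) = x := by simp
      have hend1 : x + (1:ℝ) • (y - x) = y := by module
      rw [hmid, hend0, hend1] at hkey2
      have harg : (2:ℝ) • ((1/2 : ℝ) • (x + y)) = x + y := by module
      have h2 : G (x + y) = 2 * G ((1/2 : ℝ) • (x + y)) := by
        conv_lhs => rw [← harg]
        exact hGhom0 2 (by norm_num) _
      have hkey2' : G ((1/2 : ℝ) • (x + y)) ≤ (1/2) * G x + (1/2) * G y := by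
        simp only [hGdef]
        simpa [smul_eq_mul] using hkey2
      clear_value G
      linarith [hkey2', h2]
  -- G is convex on all of ℝⁿ
  have hGconv : ConvexOn ℝ (Set.univ : Set (Euc n)) G := by
    refine ⟨convex_univ, ?_⟩
    intro x _ y _ a b ha hb hab
    rcases eq_or_lt_of_le ha with rfl | ha'
    · have hb1 : b = 1 := by linarith
      subst hb1
      simp
    rcases eq_or_lt_of_le hb with rfl | hb'
    · have ha1 : a = 1 := by linarith
      subst ha1
      simp
    calc G (a • x + b • y) ≤ G (a • x) + G (b • y) := hGsub _ _
      _ = a * G x + b * G y := by rw [hGhom a ha' x, hGhom b hb' y]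
      _ = a • G x + b • G y := by simp [smul_eq_mul]
  constructor
  · exact ⟨R, hRpos, by simpa only [hGdef] using hGconv⟩
  · have hCbound : ∀ x : Euc n, |G x| ≤ (M₀ + R) * ‖x‖ := by
      intro x
      simp only [hGdef]
      have h1 := hFbound x
      have h2 : |F x + R * ‖x‖| ≤ |F x| + R * ‖x‖ := by
        have := abs_add_le (F x) (R * ‖x‖)
        have h3 : |R * ‖x‖| = R * ‖x‖ := abs_of_nonneg (by positivity)
        linarith
      nlinarith [norm_nonneg x]
    obtain ⟨A, hA⟩ := sublinear_is_support G hGsub hGhom hG0 (M₀ + R) hCbound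
    obtain ⟨B, hB⟩ := sublinear_is_support (fun x : Euc n => R * ‖x‖)
      (fun x y => by
        have := norm_add_le x y
        nlinarith)
      (fun t ht x => by
        simp only [norm_smul, Real.norm_eq_abs, abs_of_pos ht]
        ring)
      (by simp) R
      (fun x => by
        rw [abs_of_nonneg (by positivity)])
    refine ⟨A, B, fun y => ?_⟩
    rw [hA y, hB y]
    simp only [hGdef]
    ring
end
end
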